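/- If u : ℝ² → ℝ is C² in each variable with continuous mixed partials up to order (2,2) on [0,h₁]×[0,h₂], then for all (x,y) in this rectangle, u(x,y) = u(0,0) + x·u_x(0,0) + y·u_y(0,0) + x·y·u_{xy}(0,0) + ∫₀^x (x−α)·u_{xx}(α,0) dα + y·∫₀^x (x−α)·u_{xxy}(α,0) dα + ∫₀^y (y−β)·u_{yy}(0,β) dβ + x·∫₀^y (y−β)·u_{xyy}(0,β) dβ + ∫₀^x ∫₀^y (x−α)(y−β)·u_{xxyy}(α,β) dα dβ. -/

import Mathlib

open Set intervalIntegral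

/-- Partial derivative in the first variable. -/
noncomputable def Dx (u : ℝ → ℝ → ℝ) : ℝ → ℝ → ℝ := fun x y => deriv (fun t => u t y) x

/-- Partial derivative in the second variable. -/
noncomputable def Dy (u : ℝ → ℝ → ℝ) : ℝ → ℝ → ℝ := fun x y => deriv (fun t => u x t) y

/-!
Expand `u` by Taylor's formula with integral remainder in `y` about `(x, 0)`, then expand the
three coefficients `u(·, 0)`, `u_y(·, 0)` and `u_yy(·, β)` in `x` about `0`; Fubini's theorem puts
the last remainder in the stated order of integration.

The stated formula carries `∂_y² ∂_x² u`, whereas the hypotheses control `∂_x² ∂_y² u`. They agree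
on the open rectangle: differentiating `u(x, y) - u(x, b) = ∫_b^y u_y(x, t) dt` in `x` under the
integral sign gives `∂_x^k u(x, y) - ∂_x^k u(x, b) = ∫_b^y ∂_x^k u_y(x, t) dt`, and the fundamental
theorem of calculus in `y` then swaps `∂_y` past `∂_x^k`. The boundary of the rectangle is a null
set for the double integral.
-/

open MeasureTheory Filter Function Topology

theorem taylor_integral_remainder_one {f : ℝ → ℝ} {a x : ℝ} (hf : Differentiable ℝ f)
    (hf' : Differentiable ℝ (deriv f)) (hf'' : ContinuousOn (deriv (deriv f)) (uIcc a x)) :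
    f x = f a + (x - a) * deriv f a + ∫ t in a..x, (x - t) * deriv (deriv f) t := by
  have hF : ∀ t ∈ uIcc a x, HasDerivAt (fun s => f s + (x - s) * deriv f s)
      ((x - t) * deriv (deriv f) t) t := fun t _ =>
    ((hf t).hasDerivAt.add (((hasDerivAt_id' t).const_sub x).mul (hf' t).hasDerivAt)).congr_deriv
      (by ring)
  rw [integral_eq_sub_of_hasDerivAt hF
    ((continuous_sub_left x).continuousOn.mul hf'').intervalIntegrable]
  ring

theorem taylor_Dx {v : ℝ → ℝ → ℝ} {s t : Set ℝ} (hv : ∀ y, Differentiable ℝ (v · y))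
    (hv' : ∀ y, Differentiable ℝ (Dx v · y)) (hc : ContinuousOn (uncurry (Dx^[2] v)) (s ×ˢ t))
    {a x y : ℝ} (hax : uIcc a x ⊆ s) (hy : y ∈ t) :
    v x y = v a y + (x - a) * Dx v a y + ∫ α in a..x, (x - α) * Dx^[2] v α y :=
  taylor_integral_remainder_one (hv y) (hv' y) ((hc.uncurry_right y hy).mono hax)

theorem taylor_Dy {v : ℝ → ℝ → ℝ} {s t : Set ℝ} (hv : ∀ x, Differentiable ℝ (v x ·))
    (hv' : ∀ x, Differentiable ℝ (Dy v x ·)) (hc : ContinuousOn (uncurry (Dy^[2] v)) (s ×ˢ t))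
    {x b y : ℝ} (hx : x ∈ s) (hby : uIcc b y ⊆ t) :
    v x y = v x b + (y - b) * Dy v x b + ∫ β in b..y, (y - β) * Dy^[2] v x β :=
  taylor_integral_remainder_one (hv x) (hv' x) ((hc.uncurry_left x hx).mono hby)

theorem integral_mul_eq_taylor_Dx {w : ℝ → ℝ → ℝ} {φ : ℝ → ℝ} {s t : Set ℝ} {a x c d : ℝ}
    (hφ : ContinuousOn φ (uIcc c d)) (hw : ∀ y, Differentiable ℝ (w · y))
    (hw' : ∀ y, Differentiable ℝ (Dx w · y)) (hc₀ : ContinuousOn (uncurry w) (s ×ˢ t))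
    (hc₁ : ContinuousOn (uncurry (Dx w)) (s ×ˢ t))
    (hc₂ : ContinuousOn (uncurry (Dx^[2] w)) (s ×ˢ t)) (hax : uIcc a x ⊆ s)
    (hcd : uIcc c d ⊆ t) :
    ∫ β in c..d, φ β * w x β = (∫ β in c..d, φ β * w a β)
      + (x - a) * (∫ β in c..d, φ β * Dx w a β)
      + ∫ α in a..x, ∫ β in c..d, (x - α) * φ β * Dx^[2] w α β := by
  have hint {f : ℝ → ℝ → ℝ} (hf : ContinuousOn (uncurry f) (s ×ˢ t)) {z : ℝ} (hz : z ∈ s) :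
      IntervalIntegrable (fun β => φ β * f z β) volume c d :=
    (hφ.mul ((hf.uncurry_left z hz).mono hcd)).intervalIntegrable
  have ha : a ∈ s := hax left_mem_uIcc
  have hx : x ∈ s := hax right_mem_uIcc
  have hremainder : ContinuousOn (uncurry fun α β => (x - α) * φ β * Dx^[2] w α β)
      (uIcc a x ×ˢ uIcc c d) :=
    ((continuousOn_const.sub continuousOn_fst).mul (hφ.comp continuousOn_snd fun _ hp => hp.2)).mul
      (hc₂.mono (prod_mono hax hcd))
  calc ∫ β in c..d, φ β * w x β
      = (∫ β in c..d, φ β * w a β) + (x - a) * (∫ β in c..d, φ β * Dx w a β)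
        + ∫ β in c..d, (φ β * w x β - φ β * w a β - (x - a) * (φ β * Dx w a β)) := by
        rw [integral_sub ((hint hc₀ hx).sub (hint hc₀ ha)) ((hint hc₁ ha).const_mul _),
          integral_sub (hint hc₀ hx) (hint hc₀ ha), intervalIntegral.integral_const_mul]
        ring
    _ = (∫ β in c..d, φ β * w a β) + (x - a) * (∫ β in c..d, φ β * Dx w a β)
        + ∫ β in c..d, ∫ α in a..x, (x - α) * φ β * Dx^[2] w α β := by
        congr 1
        refine integral_congr fun β hβ => ?_
        simp only [mul_right_comm _ (φ β), intervalIntegral.integral_mul_const]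
        rw [taylor_Dx hw hw' hc₂ hax (hcd hβ)]
        ring
    _ = _ := by
        rw [← intervalIntegral_intervalIntegral_swap
          ((hremainder.integrableOn_compact (isCompact_uIcc.prod isCompact_uIcc)).mono_set
            (prod_mono uIoc_subset_uIcc uIoc_subset_uIcc))]

theorem hasDerivAt_intervalIntegral_of_continuousOn {E : Type*} [NormedAddCommGroup E]
    [NormedSpace ℝ E] {v v' : ℝ → ℝ → E} {K : Set ℝ} {x₀ a b : ℝ} (hK : IsCompact K)
    (hx₀ : K ∈ 𝓝 x₀) (hv : ContinuousOn (uncurry v) (K ×ˢ uIcc a b))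
    (hv' : ContinuousOn (uncurry v') (K ×ˢ uIcc a b))
    (hderiv : ∀ x ∈ K, ∀ t ∈ uIcc a b, HasDerivAt (v · t) (v' x t) x) :
    HasDerivAt (fun x => ∫ t in a..b, v x t) (∫ t in a..b, v' x₀ t) x₀ := by
  obtain ⟨C, hC⟩ := (hK.prod isCompact_uIcc).exists_bound_of_continuousOn hv'
  have hsection {w : ℝ → ℝ → E} (hw : ContinuousOn (uncurry w) (K ×ˢ uIcc a b)) {x : ℝ}
      (hx : x ∈ K) : AEStronglyMeasurable (w x) (volume.restrict (uIoc a b)) :=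
    ((hw.uncurry_left x hx).mono uIoc_subset_uIcc).aestronglyMeasurable measurableSet_uIoc
  have hx₀K : x₀ ∈ K := mem_of_mem_nhds hx₀
  refine (hasDerivAt_integral_of_dominated_loc_of_deriv_le (bound := fun _ => C) hx₀
    (eventually_of_mem hx₀ fun x hx => hsection hv hx)
    ((hv.uncurry_left x₀ hx₀K).intervalIntegrable) (hsection hv' hx₀K) ?_
    intervalIntegrable_const ?_).2
  · exact ae_of_all _ fun t ht x hx => hC (x, t) ⟨hx, uIoc_subset_uIcc ht⟩
  · exact ae_of_all _ fun t ht x hx => hderiv x hx t (uIoc_subset_uIcc ht)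

theorem Dx_sub_eq_integral_Dx {w g : ℝ → ℝ → ℝ} {K : Set ℝ} {x b y : ℝ} (hK : IsCompact K)
    (hx : K ∈ 𝓝 x) (hg : ContinuousOn (uncurry g) (K ×ˢ uIcc b y))
    (hg' : ContinuousOn (uncurry (Dx g)) (K ×ˢ uIcc b y)) (hgx : ∀ t, Differentiable ℝ (g · t))
    (hwy : DifferentiableAt ℝ (w · y) x) (hwb : DifferentiableAt ℝ (w · b) x)
    (hwg : ∀ᶠ x' in 𝓝 x, w x' y - w x' b = ∫ t in b..y, g x' t) :
    Dx w x y - Dx w x b = ∫ t in b..y, Dx g x t :=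
  (hwy.hasDerivAt.sub hwb.hasDerivAt).unique <|
    (hasDerivAt_intervalIntegral_of_continuousOn hK hx hg hg'
      fun x' _ t _ => (hgx t x').hasDerivAt).congr_of_eventuallyEq hwg

section MixedPartials

variable {v : ℝ → ℝ → ℝ} {a₁ b₁ a₂ b₂ : ℝ} {n : ℕ}

theorem iterate_Dx_sub_eq_integral (hvy : ∀ x, Differentiable ℝ (v x ·))
    (hvx : ∀ k < n, ∀ y, Differentiable ℝ (Dx^[k] v · y))
    (hDyvx : ∀ k < n, ∀ y, Differentiable ℝ (Dx^[k] (Dy v) · y))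
    (hc : ∀ k ≤ n, ContinuousOn (uncurry (Dx^[k] (Dy v))) (Icc a₁ b₁ ×ˢ Icc a₂ b₂))
    {x b y : ℝ} (hx : x ∈ Ioo a₁ b₁) (hb : b ∈ Icc a₂ b₂) (hy : y ∈ Icc a₂ b₂) :
    Dx^[n] v x y - Dx^[n] v x b = ∫ t in b..y, Dx^[n] (Dy v) x t := by
  have hby : uIcc b y ⊆ Icc a₂ b₂ := uIcc_subset_Icc hb hy
  induction n generalizing x with
  | zero =>
    exact (integral_eq_sub_of_hasDerivAt (fun t _ => (hvy x t).hasDerivAt)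
      (((hc 0 le_rfl).uncurry_left x (Ioo_subset_Icc_self hx)).mono hby).intervalIntegrable).symm
  | succ n ih =>
    have hc' := hc (n + 1) le_rfl
    rw [iterate_succ_apply'] at hc'
    rw [iterate_succ_apply', iterate_succ_apply']
    refine Dx_sub_eq_integral_Dx isCompact_Icc (Icc_mem_nhds hx.1 hx.2)
      ((hc n n.le_succ).mono (prod_mono subset_rfl hby)) (hc'.mono (prod_mono subset_rfl hby))
      (hDyvx n n.lt_succ_self) (hvx n n.lt_succ_self y x) (hvx n n.lt_succ_self b x) ?_
    filter_upwards [Ioo_mem_nhds hx.1 hx.2] with x' hx'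
    exact ih (fun k hk => hvx k (hk.trans n.lt_succ_self))
      (fun k hk => hDyvx k (hk.trans n.lt_succ_self)) (fun k hk => hc k (hk.trans n.le_succ)) hx'

theorem Dy_iterate_Dx_eq_iterate_Dx_Dy (hvy : ∀ x, Differentiable ℝ (v x ·))
    (hvx : ∀ k < n, ∀ y, Differentiable ℝ (Dx^[k] v · y))
    (hDyvx : ∀ k < n, ∀ y, Differentiable ℝ (Dx^[k] (Dy v) · y))
    (hc : ∀ k ≤ n, ContinuousOn (uncurry (Dx^[k] (Dy v))) (Icc a₁ b₁ ×ˢ Icc a₂ b₂))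
    {x y : ℝ} (hx : x ∈ Ioo a₁ b₁) (hy : y ∈ Ioo a₂ b₂) :
    Dy (Dx^[n] v) x y = Dx^[n] (Dy v) x y := by
  have hyI : y ∈ Icc a₂ b₂ := Ioo_subset_Icc_self hy
  have hcy : ContinuousOn (Dx^[n] (Dy v) x) (Icc a₂ b₂) :=
    (hc n le_rfl).uncurry_left x (Ioo_subset_Icc_self hx)
  have hprimitive : HasDerivAt (fun z => ∫ t in y..z, Dx^[n] (Dy v) x t)
      (Dx^[n] (Dy v) x y) y :=
    integral_hasDerivAt_right (hcy.mono (uIcc_subset_Icc hyI hyI)).intervalIntegrable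
      ((hcy.mono Ioo_subset_Icc_self).stronglyMeasurableAtFilter isOpen_Ioo y hy)
      (hcy.continuousAt (Icc_mem_nhds hy.1 hy.2))
  refine ((hprimitive.const_add (Dx^[n] v x y)).congr_of_eventuallyEq ?_).deriv
  filter_upwards [Icc_mem_nhds hy.1 hy.2] with z hz
  rw [← iterate_Dx_sub_eq_integral hvy hvx hDyvx hc hx hyI hz]
  ring

theorem iterate_Dy_iterate_Dx_eq {m : ℕ}
    (hdy : ∀ j < m, ∀ x, Differentiable ℝ (Dy^[j] v x ·))
    (hdx : ∀ i < n, ∀ j ≤ m, ∀ y, Differentiable ℝ (Dx^[i] (Dy^[j] v) · y))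
    (hc : ∀ i ≤ n, ∀ j < m, ContinuousOn (uncurry (Dx^[i] (Dy^[j + 1] v)))
      (Icc a₁ b₁ ×ˢ Icc a₂ b₂))
    {x y : ℝ} (hx : x ∈ Ioo a₁ b₁) (hy : y ∈ Ioo a₂ b₂) :
    Dy^[m] (Dx^[n] v) x y = Dx^[n] (Dy^[m] v) x y := by
  induction m generalizing y with
  | zero => rfl
  | succ m ih =>
    have hswap := Dy_iterate_Dx_eq_iterate_Dx_Dy (v := Dy^[m] v) (hdy m m.lt_succ_self)
      (fun i hi => hdx i hi m m.le_succ) (fun i hi => ?_) (fun i hi => ?_) hx hy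
    · rw [iterate_succ_apply', iterate_succ_apply', ← hswap]
      refine EventuallyEq.deriv_eq (eventually_of_mem (Ioo_mem_nhds hy.1 hy.2) fun z hz => ?_)
      exact ih (fun j hj => hdy j (hj.trans m.lt_succ_self))
        (fun i hi j hj => hdx i hi j (hj.trans m.le_succ))
        (fun i hi j hj => hc i hi j (hj.trans m.lt_succ_self)) hz
    · rw [← iterate_succ_apply' Dy]
      exact hdx i hi (m + 1) le_rfl
    · rw [← iterate_succ_apply' Dy]
      exact hc i hi m m.lt_succ_self

end MixedPartials

theorem integral_representation_general
    (h₁ h₂ : ℝ) (u : ℝ → ℝ → ℝ)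
    (hcont : ∀ i j : ℕ, i ≤ 2 → j ≤ 2 →
      ContinuousOn (fun p : ℝ × ℝ => Dx^[i] (Dy^[j] u) p.1 p.2) (Icc 0 h₁ ×ˢ Icc 0 h₂))
    (hdx : ∀ i j : ℕ, i ≤ 1 → j ≤ 2 → ∀ y, Differentiable ℝ (fun t => Dx^[i] (Dy^[j] u) t y))
    (hdy : ∀ i j : ℕ, i ≤ 2 → j ≤ 1 → ∀ x, Differentiable ℝ (fun t => Dx^[i] (Dy^[j] u) x t)) :
    ∀ x ∈ Icc 0 h₁, ∀ y ∈ Icc 0 h₂,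
      u x y = u 0 0 + x * Dx u 0 0 + y * Dy u 0 0 + x * y * Dx (Dy u) 0 0
        + (∫ α in (0:ℝ)..x, (x - α) * Dx^[2] u α 0)
        + y * (∫ α in (0:ℝ)..x, (x - α) * Dx^[2] (Dy u) α 0)
        + (∫ β in (0:ℝ)..y, (y - β) * Dy^[2] u 0 β)
        + x * (∫ β in (0:ℝ)..y, (y - β) * Dx (Dy^[2] u) 0 β)
        + ∫ α in (0:ℝ)..x, ∫ β in (0:ℝ)..y, (x - α) * (y - β) * Dy^[2] (Dx^[2] u) α β := by
  intro x hx y hy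
  have h0x : (0 : ℝ) ∈ Icc 0 h₁ := left_mem_Icc.2 (hx.1.trans hx.2)
  have h0y : (0 : ℝ) ∈ Icc 0 h₂ := left_mem_Icc.2 (hy.1.trans hy.2)
  have hx₀ : uIcc 0 x ⊆ Icc 0 h₁ := uIcc_subset_Icc h0x hx
  have hy₀ : uIcc 0 y ⊆ Icc 0 h₂ := uIcc_subset_Icc h0y hy
  have hmixed : ∫ α in (0:ℝ)..x, ∫ β in (0:ℝ)..y, (x - α) * (y - β) * Dy^[2] (Dx^[2] u) α β
      = ∫ α in (0:ℝ)..x, ∫ β in (0:ℝ)..y, (x - α) * (y - β) * Dx^[2] (Dy^[2] u) α β :=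
    integral_congr_uIoo fun α hα => integral_congr_uIoo fun β hβ => by
      rw [iterate_Dy_iterate_Dx_eq (fun j hj => hdy 0 j (by omega) (by omega))
        (fun i hi j hj => hdx i j (by omega) hj) (fun i hi j hj => hcont i (j + 1) hi (by omega))
        (uIoo_subset_Ioo h0x hx hα) (uIoo_subset_Ioo h0y hy hβ)]
  rw [taylor_Dy (v := u) (hdy 0 0 (by norm_num) (by norm_num)) (hdy 0 1 (by norm_num) le_rfl)
      (hcont 0 2 (by norm_num) le_rfl) hx hy₀,
    taylor_Dx (v := u) (hdx 0 0 (by norm_num) (by norm_num)) (hdx 1 0 le_rfl (by norm_num))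
      (hcont 2 0 le_rfl (by norm_num)) hx₀ h0y,
    taylor_Dx (v := Dy u) (hdx 0 1 (by norm_num) (by norm_num)) (hdx 1 1 le_rfl (by norm_num))
      (hcont 2 1 le_rfl (by norm_num)) hx₀ h0y,
    integral_mul_eq_taylor_Dx (w := Dy^[2] u) (φ := (y - ·)) (continuous_sub_left y).continuousOn
      (hdx 0 2 (by norm_num) le_rfl) (hdx 1 2 le_rfl le_rfl) (hcont 0 2 (by norm_num) le_rfl)
      (hcont 1 2 (by norm_num) le_rfl) (hcont 2 2 le_rfl le_rfl) hx₀ hy₀, hmixed]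
  simp only [sub_zero]
  ring

/-- integral representation (9) of smooth functions on the rectangle. -/
theorem integral_representation
    (h₁ h₂ : ℝ) (hh₁ : 0 < h₁) (hh₂ : 0 < h₂) (u : ℝ → ℝ → ℝ)
    (hcont : ∀ i j : ℕ, i ≤ 2 → j ≤ 2 →
      ContinuousOn (fun p : ℝ × ℝ => Dx^[i] (Dy^[j] u) p.1 p.2) (Icc 0 h₁ ×ˢ Icc 0 h₂))
    (hdx : ∀ i j : ℕ, i ≤ 1 → j ≤ 2 → ∀ y, Differentiable ℝ (fun t => Dx^[i] (Dy^[j] u) t y))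
    (hdy : ∀ i j : ℕ, i ≤ 2 → j ≤ 1 → ∀ x, Differentiable ℝ (fun t => Dx^[i] (Dy^[j] u) x t)) :
    ∀ x ∈ Icc 0 h₁, ∀ y ∈ Icc 0 h₂,
      u x y = u 0 0 + x * Dx u 0 0 + y * Dy u 0 0 + x * y * Dx (Dy u) 0 0
        + (∫ α in (0:ℝ)..x, (x - α) * Dx^[2] u α 0)
        + y * (∫ α in (0:ℝ)..x, (x - α) * Dx^[2] (Dy u) α 0)
        + (∫ β in (0:ℝ)..y, (y - β) * Dy^[2] u 0 β)
        + x * (∫ β in (0:ℝ)..y, (y - β) * Dx (Dy^[2] u) 0 β)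
        + ∫ α in (0:ℝ)..x, ∫ β in (0:ℝ)..y, (x - α) * (y - β) * Dy^[2] (Dx^[2] u) α β :=
  integral_representation_general h₁ h₂ u hcont hdx hdy
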